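/- Combined leakage bound: let p be a random variable (user representation), g a deterministic function, v̂ = g(p) the predicted outcome, v the true outcome, and d any user attribute. If I(v; v̂) > H(v | d) then I(p; d) ≥ I(v̂; d) > 0. -/

import Mathlib

/-!
Both claims are Shannon-type inequalities, consequences of `I(X; Y | Z) ≥ 0`. That in turn is
Gibbs' inequality on each slice `Z = c`, comparing the joint law of `(X, Y)` there with the
product of its marginals. Data processing: since `g p` is a function of `p`, `I(p; d | g p)`
equals `I(p; d) - I(g p; d)`. Leakage: `I(v̂; d | v) ≥ 0` together with
`H(v̂, d) ≤ H(v, v̂, d)` gives `I(v; v̂) - H(v | d) ≤ I(v̂; d)`, which is positive by hypothesis.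
-/

open Finset

variable {Ω : Type*} [Fintype Ω]

/-- Probability that random variable `X` takes value `s`, under mass function `μ`. -/
noncomputable def probOf (μ : Ω → ℝ) {S : Type*} [DecidableEq S] (X : Ω → S) (s : S) : ℝ :=
  ∑ ω ∈ Finset.univ.filter fun ω => X ω = s, μ ω

/-- `μ` is a probability mass function on the finite sample space `Ω`. -/
def IsProbMass (μ : Ω → ℝ) : Prop := (∀ ω, 0 ≤ μ ω) ∧ ∑ ω, μ ω = 1

/-- Shannon entropy of a finitely supported random variable. -/
noncomputable def entropy (μ : Ω → ℝ) {S : Type*} [Fintype S] [DecidableEq S]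
    (X : Ω → S) : ℝ :=
  ∑ s : S, Real.negMulLog (probOf μ X s)

/-- Conditional Shannon entropy `H(X | Y) = H(X, Y) - H(Y)`. -/
noncomputable def condEntropy (μ : Ω → ℝ) {S T : Type*} [Fintype S] [DecidableEq S]
    [Fintype T] [DecidableEq T] (X : Ω → S) (Y : Ω → T) : ℝ :=
  entropy μ (fun ω => (X ω, Y ω)) - entropy μ Y

/-- Mutual information `I(X; Y) = H(X) + H(Y) - H(X, Y)`. -/
noncomputable def mutualInfo (μ : Ω → ℝ) {S T : Type*} [Fintype S] [DecidableEq S]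
    [Fintype T] [DecidableEq T] (X : Ω → S) (Y : Ω → T) : ℝ :=
  entropy μ X + entropy μ Y - entropy μ (fun ω => (X ω, Y ω))

/-- Conditional mutual information `I(X; Y | Z) = H(X,Z) + H(Y,Z) - H(X,Y,Z) - H(Z)`. -/
noncomputable def condMutualInfo (μ : Ω → ℝ) {S T U : Type*} [Fintype S] [DecidableEq S]
    [Fintype T] [DecidableEq T] [Fintype U] [DecidableEq U]
    (X : Ω → S) (Y : Ω → T) (Z : Ω → U) : ℝ :=
  entropy μ (fun ω => (X ω, Z ω)) + entropy μ (fun ω => (Y ω, Z ω))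
    - entropy μ (fun ω => (X ω, Y ω, Z ω)) - entropy μ Z

/-- Independence of two random variables: the joint distribution factorizes. -/
def IndepRV (μ : Ω → ℝ) {S T : Type*} [DecidableEq S] [DecidableEq T]
    (X : Ω → S) (Y : Ω → T) : Prop :=
  ∀ s t, probOf μ (fun ω => (X ω, Y ω)) (s, t) = probOf μ X s * probOf μ Y t

open Real

lemma negMulLog_le_neg_mul_log_add_sub {x y : ℝ} (hx : 0 ≤ x) (hy : 0 ≤ y)
    (hxy : 0 < x → 0 < y) : negMulLog x ≤ -(x * log y) + (y - x) := by
  rcases hx.eq_or_lt with rfl | hx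
  · simpa using hy
  have hy := hxy hx
  have h := mul_le_mul_of_nonneg_left (log_le_sub_one_of_pos (div_pos hy hx)) hx.le
  rw [log_div hy.ne' hx.ne', mul_sub, mul_sub, mul_one, mul_div_cancel₀ _ hx.ne'] at h
  rw [negMulLog, neg_mul]
  linarith

lemma sum_negMulLog_le_sum_neg_mul_log {ι : Type*} [Fintype ι] {x y : ι → ℝ}
    (hx : ∀ i, 0 ≤ x i) (hy : ∀ i, 0 ≤ y i) (hxy : ∀ i, 0 < x i → 0 < y i)
    (hsum : ∑ i, y i ≤ ∑ i, x i) :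
    ∑ i, negMulLog (x i) ≤ ∑ i, -(x i * log (y i)) := by
  have h := Finset.sum_le_sum fun i (_ : i ∈ Finset.univ) =>
    negMulLog_le_neg_mul_log_add_sub (hx i) (hy i) (hxy i)
  rw [Finset.sum_add_distrib, Finset.sum_sub_distrib] at h
  linarith

lemma sum_negMulLog_add_negMulLog_sum_le {A B : Type*} [Fintype A] [Fintype B]
    (m : A → B → ℝ) (hm : ∀ a b, 0 ≤ m a b) :
    ∑ a, ∑ b, negMulLog (m a b) + negMulLog (∑ a, ∑ b, m a b)
      ≤ ∑ a, negMulLog (∑ b, m a b) + ∑ b, negMulLog (∑ a, m a b) := by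
  set r : A → ℝ := fun a => ∑ b, m a b
  set c : B → ℝ := fun b => ∑ a, m a b
  set t := ∑ a, ∑ b, m a b
  have hr : ∀ a, 0 ≤ r a := fun a => Finset.sum_nonneg fun b _ => hm a b
  have hc : ∀ b, 0 ≤ c b := fun b => Finset.sum_nonneg fun a _ => hm a b
  have hm_le_r : ∀ a b, m a b ≤ r a := fun a b =>
    Finset.single_le_sum (fun b _ => hm a b) (Finset.mem_univ b)
  have hm_le_c : ∀ a b, m a b ≤ c b := fun a b =>
    Finset.single_le_sum (fun a _ => hm a b) (Finset.mem_univ a)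
  have hr_le_t : ∀ a, r a ≤ t := fun a =>
    Finset.single_le_sum (fun a _ => hr a) (Finset.mem_univ a)
  have hr_sum : ∑ a, r a = t := rfl
  have hc_sum : ∑ b, c b = t := Finset.sum_comm
  -- Gibbs' inequality against the product of the marginals, `r a * c b / t`
  have gibbs := sum_negMulLog_le_sum_neg_mul_log (x := fun ab : A × B => m ab.1 ab.2)
    (y := fun ab => r ab.1 * c ab.2 / t) (fun ab => hm _ _)
    (fun ab => div_nonneg (mul_nonneg (hr _) (hc _)) ((hr ab.1).trans (hr_le_t _)))
    (fun ab h => div_pos (mul_pos (h.trans_le (hm_le_r _ _)) (h.trans_le (hm_le_c _ _)))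
      ((h.trans_le (hm_le_r _ _)).trans_le (hr_le_t _)))
    (by simp only [Fintype.sum_prod_type, ← Finset.sum_div, ← Finset.mul_sum, ← Finset.sum_mul,
      hr_sum, hc_sum, mul_self_div_self]; exact le_rfl)
  have hlog : ∀ a b, m a b * log (r a * c b / t)
      = m a b * log (r a) + m a b * log (c b) - m a b * log t := by
    intro a b
    rcases (hm a b).eq_or_lt with h0 | hpos
    · simp [← h0]
    have hr := hpos.trans_le (hm_le_r a b)
    have hc := hpos.trans_le (hm_le_c a b)
    rw [log_div (mul_pos hr hc).ne' (hr.trans_le (hr_le_t a)).ne', log_mul hr.ne' hc.ne']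
    ring
  simp only [Fintype.sum_prod_type, hlog] at gibbs
  have cross : ∑ a, ∑ b, -(m a b * log (r a) + m a b * log (c b) - m a b * log t)
      = ∑ a, negMulLog (r a) + ∑ b, negMulLog (c b) - negMulLog t := by
    simp only [neg_sub, Finset.sum_sub_distrib, Finset.sum_add_distrib]
    rw [Finset.sum_comm (f := fun a b => m a b * log (c b))]
    simp only [← Finset.sum_mul, negMulLog, neg_mul, Finset.sum_neg_distrib, r, c, t]
    ring
  linarith

lemma probOf_nonneg {μ : Ω → ℝ} (hμ : ∀ ω, 0 ≤ μ ω) {S : Type*} [DecidableEq S] (X : Ω → S)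
    (s : S) : 0 ≤ probOf μ X s :=
  Finset.sum_nonneg fun ω _ => hμ ω

lemma probOf_comp {μ : Ω → ℝ} {S T : Type*} [Fintype S] [DecidableEq S] [DecidableEq T]
    (X : Ω → S) (f : S → T) (t : T) :
    probOf μ (fun ω => f (X ω)) t = ∑ s, if f s = t then probOf μ X s else 0 := by
  unfold probOf
  rw [← Finset.sum_fiberwise _ X]
  refine Finset.sum_congr rfl fun s _ => ?_
  split_ifs with h
  · congr 1; ext ω; aesop
  · exact Finset.sum_eq_zero fun ω hω => by aesop

section Shannon

variable {μ : Ω → ℝ} {S T U : Type*} [Fintype S] [DecidableEq S] [Fintype T] [DecidableEq T]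
  [Fintype U] [DecidableEq U]

lemma probOf_prod_eq_sum_triple_mid (X : Ω → S) (Y : Ω → T) (Z : Ω → U) (a : S) (c : U) :
    probOf μ (fun ω => (X ω, Z ω)) (a, c)
      = ∑ b, probOf μ (fun ω => (X ω, Y ω, Z ω)) (a, b, c) := by
  rw [probOf_comp (fun ω => (X ω, Y ω, Z ω)) (fun x => (x.1, x.2.2))]
  simp [Fintype.sum_prod_type, Prod.ext_iff, ite_and]

lemma probOf_prod_eq_sum_triple_fst (X : Ω → S) (Y : Ω → T) (Z : Ω → U) (b : T) (c : U) :
    probOf μ (fun ω => (Y ω, Z ω)) (b, c)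
      = ∑ a, probOf μ (fun ω => (X ω, Y ω, Z ω)) (a, b, c) := by
  rw [probOf_comp (fun ω => (X ω, Y ω, Z ω)) (fun x => x.2)]
  simp [Fintype.sum_prod_type]

lemma probOf_eq_sum_sum_triple (X : Ω → S) (Y : Ω → T) (Z : Ω → U) (c : U) :
    probOf μ Z c = ∑ b, ∑ a, probOf μ (fun ω => (X ω, Y ω, Z ω)) (a, b, c) := by
  rw [probOf_comp (fun ω => (X ω, Y ω, Z ω)) (fun x => x.2.2), Finset.sum_comm]
  simp [Fintype.sum_prod_type]

variable (μ)

lemma entropy_comp_of_injective (X : Ω → S) {f : S → T} (hf : Function.Injective f) :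
    entropy μ (fun ω => f (X ω)) = entropy μ X := by
  refine (Fintype.sum_of_injective f hf _ _ (fun t ht => ?_) fun s => ?_).symm
  · rw [probOf_comp, Finset.sum_eq_zero fun s _ => if_neg fun h => ht ⟨s, h⟩, negMulLog_zero]
  · simp [probOf_comp, hf.eq_iff]

lemma entropy_prod_comm (X : Ω → S) (Y : Ω → T) :
    entropy μ (fun ω => (X ω, Y ω)) = entropy μ (fun ω => (Y ω, X ω)) :=
  (entropy_comp_of_injective μ _ Prod.swap_injective).symm

variable {μ}

lemma condMutualInfo_nonneg (hμ : ∀ ω, 0 ≤ μ ω) (X : Ω → S) (Y : Ω → T) (Z : Ω → U) :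
    0 ≤ condMutualInfo μ X Y Z := by
  set q : S → T → U → ℝ := fun a b c => probOf μ (fun ω => (X ω, Y ω, Z ω)) (a, b, c)
  have hXYZ : entropy μ (fun ω => (X ω, Y ω, Z ω)) = ∑ c, ∑ b, ∑ a, negMulLog (q a b c) := by
    rw [entropy, Fintype.sum_prod_type_right, Fintype.sum_prod_type_right]
  have hXZ : entropy μ (fun ω => (X ω, Z ω)) = ∑ c, ∑ a, negMulLog (∑ b, q a b c) := by
    simp only [entropy, Fintype.sum_prod_type_right, probOf_prod_eq_sum_triple_mid X Y Z, q]
  have hYZ : entropy μ (fun ω => (Y ω, Z ω)) = ∑ c, ∑ b, negMulLog (∑ a, q a b c) := by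
    simp only [entropy, Fintype.sum_prod_type_right, probOf_prod_eq_sum_triple_fst X Y Z, q]
  have hZ : entropy μ Z = ∑ c, negMulLog (∑ b, ∑ a, q a b c) := by
    simp only [entropy, probOf_eq_sum_sum_triple X Y Z, q]
  have key := Finset.sum_le_sum fun c (_ : c ∈ Finset.univ) =>
    sum_negMulLog_add_negMulLog_sum_le (fun b a => q a b c) fun a b => probOf_nonneg hμ _ _
  simp only [Finset.sum_add_distrib] at key
  rw [condMutualInfo, hXYZ, hXZ, hYZ, hZ]
  linarith

lemma entropy_le_entropy_prod (hμ : ∀ ω, 0 ≤ μ ω) (X : Ω → S) (Y : Ω → T) :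
    entropy μ Y ≤ entropy μ (fun ω => (X ω, Y ω)) := by
  -- `I(X; X | Y) = H(X, Y) - H(Y)`
  have h := condMutualInfo_nonneg hμ X X Y
  rw [condMutualInfo,
    entropy_comp_of_injective μ (fun ω => (X ω, Y ω)) (f := fun x => (x.1, x.1, x.2))
      fun x y h => by simp only [Prod.ext_iff] at h ⊢; tauto] at h
  linarith

lemma mutualInfo_comp_le (hμ : ∀ ω, 0 ≤ μ ω) (X : Ω → S) (Y : Ω → T) (f : S → U) :
    mutualInfo μ (fun ω => f (X ω)) Y ≤ mutualInfo μ X Y := by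
  have h := condMutualInfo_nonneg hμ X Y fun ω => f (X ω)
  rw [condMutualInfo, entropy_prod_comm μ Y,
    entropy_comp_of_injective μ X (f := fun x => (x, f x)) fun x y h => congrArg Prod.fst h,
    entropy_comp_of_injective μ (fun ω => (X ω, Y ω)) (f := fun x => (x.1, x.2, f x.1))
      fun x y h => by simp only [Prod.ext_iff] at h ⊢; tauto] at h
  rw [mutualInfo, mutualInfo]
  linarith

lemma mutualInfo_sub_condEntropy_le (hμ : ∀ ω, 0 ≤ μ ω) (V : Ω → S) (W : Ω → T) (D : Ω → U) :
    mutualInfo μ V W - condEntropy μ V D ≤ mutualInfo μ W D := by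
  have h := condMutualInfo_nonneg hμ W D V
  have hmono := entropy_le_entropy_prod hμ V fun ω => (W ω, D ω)
  rw [condMutualInfo, entropy_prod_comm μ W, entropy_prod_comm μ D,
    entropy_comp_of_injective μ (fun ω => (V ω, W ω, D ω)) (f := fun x => (x.2.1, x.2.2, x.1))
      fun x y h => by simp only [Prod.ext_iff] at h ⊢; tauto] at h
  rw [mutualInfo, mutualInfo, condEntropy]
  linarith

end Shannon

theorem representation_leakage {P V VH D : Type*} [Fintype P] [DecidableEq P]
    [Fintype V] [DecidableEq V] [Fintype VH] [DecidableEq VH] [Fintype D] [DecidableEq D]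
    (μ : Ω → ℝ) (hμ : IsProbMass μ) (p : Ω → P) (v : Ω → V) (d : Ω → D) (g : P → VH)
    (h : mutualInfo μ v (fun ω => g (p ω)) > condEntropy μ v d) :
    mutualInfo μ p d ≥ mutualInfo μ (fun ω => g (p ω)) d ∧
      mutualInfo μ (fun ω => g (p ω)) d > 0 :=
  ⟨mutualInfo_comp_le hμ.1 p d g,
    by linarith [mutualInfo_sub_condEntropy_le hμ.1 v (fun ω => g (p ω)) d]⟩
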